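/- Let N ≥ 2, α > 0, and let l, l′ be real numbers with l > l′ > −N − α. Then for every measurable set M ⊂ ℝ^N_+ with 0 < μ_{l,α}(M) < +∞ one has μ_{l,α}(M)^{1/(l+N+α)} / μ_{l′,α}(M)^{1/(l′+N+α)} ≥ μ_{l,α}(M⋆)^{1/(l+N+α)} / μ_{l′,α}(M⋆)^{1/(l′+N+α)}, where M⋆ = B_{R⋆}^+ is the half-ball centered at the origin with μ_{l,α}(M⋆) = μ_{l,α}(M). Equivalently, μ_{l′,α}(M) ≤ μ_{l′,α}(M⋆). -/

import Mathlib

open MeasureTheory ENNReal Set Filter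
open scoped Topology NNReal

noncomputable section

abbrev Euc (N : ℕ) := EuclideanSpace ℝ (Fin N)

/-- The last coordinate `x_N` of a point of `ℝ^N`. -/
def lastCoord (N : ℕ) (x : Euc N) : ℝ := if h : 0 < N then x ⟨N - 1, by omega⟩ else 0

/-- The open upper half-space `ℝ^N_+ = {x : x_N > 0}`. -/
def upperHalf (N : ℕ) : Set (Euc N) := {x | 0 < lastCoord N x}

/-- The open half-ball `B_R^+ = {x : |x| < R, x_N > 0}`. -/
def halfBall (N : ℕ) (R : ℝ) : Set (Euc N) := {x | ‖x‖ < R ∧ 0 < lastCoord N x}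

/-- The weight `|x|^k x_N^α`. -/
def wt (N : ℕ) (k α : ℝ) (x : Euc N) : ℝ := ‖x‖ ^ k * lastCoord N x ^ α

/-- The weighted measure `μ_{l,α}(M) = ∫_M |x|^l x_N^α dx` of a set `M ⊆ ℝ^N_+`. -/
def wMeas (N : ℕ) (l α : ℝ) (M : Set (Euc N)) : ℝ≥0∞ :=
  ∫⁻ x in M, ENNReal.ofReal (wt N l α x)

/-- The divergence of a vector field on `ℝ^N`. -/
def vdiv (N : ℕ) (F : Euc N → Euc N) (x : Euc N) : ℝ :=
  ∑ i, fderiv ℝ F x (EuclideanSpace.single i 1) i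

/-- The weighted perimeter `P_{μ_{k,α}}(M)`. -/
def wPerim (N : ℕ) (k α : ℝ) (M : Set (Euc N)) : ℝ≥0∞ :=
  ⨆ v : {v : Euc N → Euc N // ContDiff ℝ 1 v ∧ HasCompactSupport v ∧ ∀ x ∈ M, ‖v x‖ ≤ 1},
    ENNReal.ofReal (∫ x in M, vdiv N (fun y => wt N k α y • v.1 y) x)

/-- A bounded open set with smooth boundary. -/
def IsSmoothBoundedDomain (N : ℕ) (Ω : Set (Euc N)) : Prop :=
  IsOpen Ω ∧ Bornology.IsBounded Ω ∧
    ∃ f : Euc N → ℝ, ContDiff ℝ (⊤ : ℕ∞) f ∧ Ω = {x | f x < 0} ∧ frontier Ω = {x | f x = 0} ∧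
      ∀ x ∈ frontier Ω, fderiv ℝ f x ≠ 0

/-- The Beta function `B(a,b) = Γ(a)Γ(b)/Γ(a+b)`. -/
def betaFn (a b : ℝ) : ℝ := Real.Gamma a * Real.Gamma b / Real.Gamma (a + b)

/-- The explicit isoperimetric constant `C^{rad}_{k,l,N,α}`. -/
def Crad (N : ℕ) (k l α : ℝ) : ℝ :=
  (l + α + N) ^ ((k + N + α - 1) / (l + N + α)) *
    (betaFn (((N : ℝ) - 1) / 2) ((α + 1) / 2) * Real.pi ^ (((N : ℝ) - 1) / 2) /
        Real.Gamma (((N : ℝ) - 1) / 2)) ^ ((l - k + 1) / (l + N + α))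

/-- The exponent in the isoperimetric inequality. -/
def isoExp (N : ℕ) (k l α : ℝ) : ℝ := (k + N + α - 1) / (l + N + α)

/-- Distribution function of `u` on `Ω` relative to `μ_{m,α}`. -/
def distFn (N : ℕ) (m α : ℝ) (Ω : Set (Euc N)) (u : Euc N → ℝ) (t : ℝ) : ℝ≥0∞ :=
  wMeas N m α {x ∈ Ω | t < |u x|}

/-- Weighted decreasing rearrangement `u*`. -/
def rearr (N : ℕ) (m α : ℝ) (Ω : Set (Euc N)) (u : Euc N → ℝ) (s : ℝ≥0∞) : ℝ :=
  sSup {t : ℝ | 0 ≤ t ∧ s < distFn N m α Ω u t}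

/-- Weighted Schwarz symmetrization `u⋆(x) = u*(μ_{m,α}(B^+_{|x|}))`. -/
def symmFn (N : ℕ) (m α : ℝ) (Ω : Set (Euc N)) (u : Euc N → ℝ) (x : Euc N) : ℝ :=
  rearr N m α Ω u (wMeas N m α (halfBall N ‖x‖))

/-- `X`: C¹ functions on `Ω̄` vanishing near `∂Ω \ {x_N = 0}`. -/
def TestFn (N : ℕ) (Ω : Set (Euc N)) (v : Euc N → ℝ) : Prop :=
  ContDiff ℝ 1 v ∧ ∃ U : Set (Euc N), IsOpen U ∧ frontier Ω \ {x | lastCoord N x = 0} ⊆ U ∧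
    ∀ x ∈ U, v x = 0

/-- `u ∈ V²(Ω, dμ_{m,α})` with weak gradient `g`. -/
def MemV2 (N : ℕ) (m α : ℝ) (Ω : Set (Euc N)) (u : Euc N → ℝ) (g : Euc N → Euc N) : Prop :=
  (∀ φ : Euc N → ℝ, ContDiff ℝ (⊤ : ℕ∞) φ → HasCompactSupport φ → tsupport φ ⊆ Ω → ∀ i : Fin N,
      ∫ x in Ω, u x * fderiv ℝ φ x (EuclideanSpace.single i 1) = -∫ x in Ω, g x i * φ x) ∧
  (∫⁻ x in Ω, ENNReal.ofReal (u x ^ 2 * wt N m α x)) < ⊤ ∧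
  (∫⁻ x in Ω, ENNReal.ofReal (‖g x‖ ^ 2 * wt N m α x)) < ⊤ ∧
  ∃ v : ℕ → Euc N → ℝ, (∀ n, TestFn N Ω (v n)) ∧
    Tendsto (fun n => ∫⁻ x in Ω, ENNReal.ofReal ((v n x - u x) ^ 2 * wt N m α x)) atTop (𝓝 0) ∧
    Tendsto (fun n => ∫⁻ x in Ω, ENNReal.ofReal (‖gradient (v n) x - g x‖ ^ 2 * wt N m α x))
      atTop (𝓝 0)

/-- Ellipticity condition. -/
def Elliptic (N : ℕ) (m α : ℝ) (Ω : Set (Euc N)) (A : Euc N → Matrix (Fin N) (Fin N) ℝ)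
    (Λ : ℝ) : Prop :=
  (∀ x, (A x).IsSymm) ∧ (∀ i j, Measurable fun x => A x i j) ∧
    ∀ᵐ x ∂(volume.restrict Ω), ∀ ζ : Euc N,
      wt N m α x * ‖ζ‖ ^ 2 ≤ ∑ i, ∑ j, A x i j * ζ i * ζ j ∧
      ∑ i, ∑ j, A x i j * ζ i * ζ j ≤ Λ * (wt N m α x * ‖ζ‖ ^ 2)

/-- Weak solution of the mixed boundary value problem. -/
def IsWeakSol (N : ℕ) (m α : ℝ) (Ω : Set (Euc N)) (A : Euc N → Matrix (Fin N) (Fin N) ℝ)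
    (f : Euc N → ℝ) (u : Euc N → ℝ) (g : Euc N → Euc N) : Prop :=
  MemV2 N m α Ω u g ∧
    ∀ φ : Euc N → ℝ, ContDiff ℝ 1 φ → (∀ x ∈ frontier Ω \ {x | lastCoord N x = 0}, φ x = 0) →
      ∫ x in Ω, ∑ i, ∑ j, A x i j * g x j * fderiv ℝ φ x (EuclideanSpace.single i 1)
        = ∫ x in Ω, f x * φ x * wt N m α x

/-- The explicit radial solution of the symmetrized problem. -/
def wSol (N : ℕ) (m α : ℝ) (Ω : Set (Euc N)) (f : Euc N → ℝ) (rstar : ℝ) (x : Euc N) : ℝ :=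
  ∫ ρ in (‖x‖)..rstar,
    (∫ σ in (0:ℝ)..ρ, rearr N m α Ω f (wMeas N m α (halfBall N σ)) * σ ^ ((N : ℝ) - 1 + m + α)) *
      ρ ^ (1 - (N : ℝ) - m - α)

/-!
Since `|x|^{l'} x_N^α = |x|^{l'-l} · |x|^l x_N^α` and `|x|^{l'-l}` is radially decreasing,
`M⋆ = B_R^+` is a superlevel set of the density of `μ_{l',α}` with respect to `μ_{l,α}`.
By the bathtub principle, among sets of the same `μ_{l,α}`-measure it carries the largest
`μ_{l',α}`-measure; the ratio inequality follows because `1/(l'+N+α) > 0`.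
-/

theorem setLIntegral_le_setLIntegral_of_bathtub {X : Type*} [MeasurableSpace X]
    {μ : Measure X} {w v : X → ℝ≥0∞} {s t : Set X} {c : ℝ≥0∞}
    (hs : MeasurableSet s) (ht : MeasurableSet t) (hc : c ≠ ∞)
    (hw : ∫⁻ x in s, w x ∂μ = ∫⁻ x in t, w x ∂μ) (hw_fin : ∫⁻ x in s, w x ∂μ ≠ ∞)
    (h_out : ∀ x ∈ s \ t, v x ≤ c * w x) (h_in : ∀ x ∈ t \ s, c * w x ≤ v x) :
    ∫⁻ x in s, v x ∂μ ≤ ∫⁻ x in t, v x ∂μ := by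
  have hw_sdiff : ∫⁻ x in s \ t, w x ∂μ = ∫⁻ x in t \ s, w x ∂μ := by
    have hfin : ∫⁻ x in s ∩ t, w x ∂μ ≠ ∞ :=
      ne_top_of_le_ne_top hw_fin (lintegral_mono_set inter_subset_left)
    refine (ENNReal.add_right_inj hfin).mp ?_
    rw [lintegral_inter_add_sdiff _ _ ht, inter_comm, lintegral_inter_add_sdiff _ _ hs, hw]
  calc ∫⁻ x in s, v x ∂μ = ∫⁻ x in s ∩ t, v x ∂μ + ∫⁻ x in s \ t, v x ∂μ :=
        (lintegral_inter_add_sdiff _ _ ht).symm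
    _ ≤ ∫⁻ x in s ∩ t, v x ∂μ + c * ∫⁻ x in s \ t, w x ∂μ := by
        gcongr
        rw [← lintegral_const_mul' c _ hc]
        exact setLIntegral_mono' (hs.diff ht) h_out
    _ = ∫⁻ x in t ∩ s, v x ∂μ + c * ∫⁻ x in t \ s, w x ∂μ := by rw [inter_comm, hw_sdiff]
    _ ≤ ∫⁻ x in t ∩ s, v x ∂μ + ∫⁻ x in t \ s, v x ∂μ := by
        gcongr
        rw [← lintegral_const_mul' c _ hc]
        exact setLIntegral_mono' (ht.diff hs) h_in
    _ = ∫⁻ x in t, v x ∂μ := lintegral_inter_add_sdiff _ _ hs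

section WeightedHalfSpace

variable {N : ℕ}

theorem continuous_lastCoord : Continuous (lastCoord N) := by
  unfold lastCoord
  split_ifs
  · exact (EuclideanSpace.proj _).continuous
  · exact continuous_const

theorem lastCoord_zero : lastCoord N 0 = 0 := by
  simp [lastCoord]

theorem measurableSet_halfBall (R : ℝ) : MeasurableSet (halfBall N R) :=
  ((isOpen_lt continuous_norm continuous_const).inter
    (isOpen_lt continuous_const continuous_lastCoord)).measurableSet

theorem norm_pos_of_mem_upperHalf {x : Euc N} (hx : x ∈ upperHalf N) : 0 < ‖x‖ := by
  refine norm_pos_iff.mpr fun h => ?_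
  simp [upperHalf, h, lastCoord_zero] at hx

theorem wt_nonneg {x : Euc N} (hx : x ∈ upperHalf N) (k α : ℝ) : 0 ≤ wt N k α x :=
  mul_nonneg (Real.rpow_nonneg (norm_nonneg x) k) (Real.rpow_nonneg (le_of_lt hx) α)

theorem wt_eq_rpow_mul_wt {x : Euc N} (hx : x ∈ upperHalf N) (k k' α : ℝ) :
    wt N k' α x = ‖x‖ ^ (k' - k) * wt N k α x := by
  rw [wt, wt, ← mul_assoc, ← Real.rpow_add (norm_pos_of_mem_upperHalf hx), sub_add_cancel]

theorem rpow_mul_wt_le_wt {k k' α R : ℝ} (hk : k' ≤ k) {x : Euc N} (hx : x ∈ upperHalf N)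
    (hxR : ‖x‖ ≤ R) : R ^ (k' - k) * wt N k α x ≤ wt N k' α x := by
  rw [wt_eq_rpow_mul_wt hx k k']
  exact mul_le_mul_of_nonneg_right
    (Real.rpow_le_rpow_of_nonpos (norm_pos_of_mem_upperHalf hx) hxR (sub_nonpos.mpr hk))
    (wt_nonneg hx k α)

theorem wt_le_rpow_mul_wt {k k' α R : ℝ} (hk : k' ≤ k) (hR : 0 < R) {x : Euc N}
    (hx : x ∈ upperHalf N) (hxR : R ≤ ‖x‖) : wt N k' α x ≤ R ^ (k' - k) * wt N k α x := by
  rw [wt_eq_rpow_mul_wt hx k k']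
  exact mul_le_mul_of_nonneg_right (Real.rpow_le_rpow_of_nonpos hR hxR (sub_nonpos.mpr hk))
    (wt_nonneg hx k α)

theorem wMeas_le_wMeas_halfBall {α l l' R : ℝ} (hll' : l' < l) (hR : 0 < R) {M : Set (Euc N)}
    (hMmeas : MeasurableSet M) (hMsub : M ⊆ upperHalf N) (hMfin : wMeas N l α M ≠ ∞)
    (hRstar : wMeas N l α (halfBall N R) = wMeas N l α M) :
    wMeas N l' α M ≤ wMeas N l' α (halfBall N R) := by
  refine setLIntegral_le_setLIntegral_of_bathtub (c := ENNReal.ofReal (R ^ (l' - l)))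
    hMmeas (measurableSet_halfBall R) ofReal_ne_top hRstar.symm hMfin ?_ ?_
  · rintro x ⟨hxM, hxB⟩
    have hRx : R ≤ ‖x‖ := not_lt.mp fun hxR => hxB ⟨hxR, hMsub hxM⟩
    rw [← ofReal_mul (Real.rpow_nonneg hR.le _)]
    exact ofReal_le_ofReal (wt_le_rpow_mul_wt hll'.le hR (hMsub hxM) hRx)
  · rintro x ⟨⟨hxR, hx⟩, -⟩
    rw [← ofReal_mul (Real.rpow_nonneg hR.le _)]
    exact ofReal_le_ofReal (rpow_mul_wt_le_wt hll'.le hx hxR.le)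

end WeightedHalfSpace

theorem wMeas_ratio_ge_symmetrization_general
    (N : ℕ) (α l l' : ℝ)
    (hl' : -(N : ℝ) - α < l') (hll' : l' < l)
    (M : Set (Euc N)) (hMmeas : MeasurableSet M) (hMsub : M ⊆ upperHalf N)
    (hMfin : wMeas N l α M < ⊤)
    (R : ℝ) (hR : 0 < R) (hRstar : wMeas N l α (halfBall N R) = wMeas N l α M) :
    (wMeas N l α (halfBall N R)) ^ (1 / (l + N + α)) /
        (wMeas N l' α (halfBall N R)) ^ (1 / (l' + N + α))
      ≤ (wMeas N l α M) ^ (1 / (l + N + α)) / (wMeas N l' α M) ^ (1 / (l' + N + α))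
    ∧ wMeas N l' α M ≤ wMeas N l' α (halfBall N R) := by
  have hle := wMeas_le_wMeas_halfBall hll' hR hMmeas hMsub hMfin.ne hRstar
  have hexp : 0 ≤ 1 / (l' + N + α) := one_div_nonneg.mpr (by linarith)
  refine ⟨?_, hle⟩
  rw [hRstar]
  exact ENNReal.div_le_div_left (ENNReal.rpow_le_rpow hle hexp) _

/-- comparison of ratios of weighted measures under symmetrization
(Hardy–Littlewood lemma): if `M⋆ = B_R^+` has the same `μ_{l,α}`-measure as `M`, then
`μ_{l,α}(M)^{1/(l+N+α)}/μ_{l',α}(M)^{1/(l'+N+α)}` is at least the corresponding ratio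
for `M⋆`; equivalently `μ_{l',α}(M) ≤ μ_{l',α}(M⋆)`. -/
theorem wMeas_ratio_ge_symmetrization
    (N : ℕ) (hN : 2 ≤ N) (α l l' : ℝ) (hα : 0 < α)
    (hl' : -(N : ℝ) - α < l') (hll' : l' < l)
    (M : Set (Euc N)) (hMmeas : MeasurableSet M) (hMsub : M ⊆ upperHalf N)
    (hM0 : 0 < wMeas N l α M) (hMfin : wMeas N l α M < ⊤)
    (R : ℝ) (hR : 0 < R) (hRstar : wMeas N l α (halfBall N R) = wMeas N l α M) :
    (wMeas N l α (halfBall N R)) ^ (1 / (l + N + α)) /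
        (wMeas N l' α (halfBall N R)) ^ (1 / (l' + N + α))
      ≤ (wMeas N l α M) ^ (1 / (l + N + α)) / (wMeas N l' α M) ^ (1 / (l' + N + α))
    ∧ wMeas N l' α M ≤ wMeas N l' α (halfBall N R) :=
  wMeas_ratio_ge_symmetrization_general N α l l' hl' hll' M hMmeas hMsub hMfin R hR hRstar

end
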